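/- Let μ be a Borel probability measure on ℝ² and fix real numbers α > 0 and ε > 0. There exist constants C > 0 and N such that: for all n ≥ N, all integers k, ℓ ≥ 2 with k·ℓ ≤ n^α, and any equipartition Γ of μ into k·⌈n^ε⌉ rows and ℓ·⌈n^ε⌉ columns, if D_n is the empirical measure of n iid points drawn from μ, then with probability at least 1 − C·n^{α+2ε−3} one has D_TV(μ|_Γ, D_n|_Γ) ≤ C·n^{α+2ε−1/2}·(log₂ n)^{1/2}. -/

import Mathlib

/-!
The number of sample points in a fixed cell is a sum of `n` i.i.d. indicators, so by Hoeffding's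
inequality its empirical mass deviates from its `μ`-mass by at least `t` with probability at most
`2 exp (-2 n t²)`. The grid has at most `4 n ^ (α + 2ε)` cells; with `t = 2 √(log₂ n / n)` a union
bound makes every cell deviate by less than `t` outside an event of probability
`8 n ^ (α + 2ε - 3)`, and then the total variation distance is at most (number of cells) · `t / 2`.
-/

open MeasureTheory Finset

noncomputable section

/-- A grid with `r` rows and `c` columns on ℝ², given by `r - 1` strictly increasing
row cut points and `c - 1` strictly increasing column cut points. -/
structure Grid (r c : ℕ) where
  rowCuts : Fin (r - 1) → ℝ
  colCuts : Fin (c - 1) → ℝ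
  rowCuts_mono : StrictMono rowCuts
  colCuts_mono : StrictMono colCuts

/-- Interval number `i` of the partition of ℝ induced by the cut points `cuts`:
`[cuts (i-1), cuts i)`, with the first interval unbounded below and the last
unbounded above. -/
def cutInterval {m : ℕ} (cuts : Fin (m - 1) → ℝ) (i : Fin m) : Set ℝ :=
  {t | (∀ j : Fin (m - 1), (j : ℕ) < (i : ℕ) → cuts j ≤ t) ∧
       (∀ j : Fin (m - 1), (i : ℕ) ≤ (j : ℕ) → t < cuts j)}

/-- Cell `(i, j)` (row `i`, column `j`) of a grid, as a subset of ℝ². -/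
def Grid.cell {r c : ℕ} (G : Grid r c) (i : Fin r) (j : Fin c) : Set (ℝ × ℝ) :=
  {p | p.1 ∈ cutInterval G.colCuts j ∧ p.2 ∈ cutInterval G.rowCuts i}

/-- The probability mass function on `{1,…,r} × {1,…,c}` induced by a measure `ν`
on a grid `G`: it assigns to `(i, j)` the `ν`-measure of cell `(i, j)`. -/
def gridPMF {r c : ℕ} (ν : Measure (ℝ × ℝ)) (G : Grid r c) (i : Fin r) (j : Fin c) : ℝ :=
  (ν (G.cell i j)).toReal

open Classical in
/-- The empirical measure of the sample `ω`, as a real-valued set function. -/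
def empMeas {n : ℕ} (ω : Fin n → ℝ × ℝ) (S : Set (ℝ × ℝ)) : ℝ :=
  ((Finset.univ.filter (fun i => ω i ∈ S)).card : ℝ) / n

/-- The pmf on cells induced by the empirical measure of the sample `ω`. -/
def empGridPMF {n r c : ℕ} (ω : Fin n → ℝ × ℝ) (G : Grid r c) (i : Fin r) (j : Fin c) : ℝ :=
  empMeas ω (G.cell i j)

/-- Mutual information (base 2) of a pmf `p` on `Fin r × Fin c`, with the convention
that terms with `p i j = 0` vanish. -/
def MI {r c : ℕ} (p : Fin r → Fin c → ℝ) : ℝ :=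
  ∑ i, ∑ j, if p i j = 0 then 0
    else p i j * Real.logb 2 (p i j / ((∑ j', p i j') * (∑ i', p i' j)))


/-- `Γ` is an equipartition of `μ` into `R` rows and `S` columns if every row of
`μ|_Γ` has total mass `1/R` and every column has total mass `1/S`. -/
def IsEquipartition (μ : Measure (ℝ × ℝ)) {R S : ℕ} (Γ : Grid R S) : Prop :=
  (∀ i, ∑ j, gridPMF μ Γ i j = 1 / (R : ℝ)) ∧ (∀ j, ∑ i, gridPMF μ Γ i j = 1 / (S : ℝ))

/-- Total variation distance between two pmfs on `Fin r × Fin c`. -/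
def tvDist {r c : ℕ} (p q : Fin r → Fin c → ℝ) : ℝ :=
  (∑ i, ∑ j, |p i j - q i j|) / 2

open ProbabilityTheory Real

section Hoeffding

variable {Ω : Type*} [MeasurableSpace Ω] {μ : Measure Ω} [IsProbabilityMeasure μ]

variable (μ) in
lemma hasSubgaussianMGF_indicator_sub_measureReal {A : Set Ω} (hA : MeasurableSet A) :
    HasSubgaussianMGF (fun x ↦ A.indicator 1 x - μ.real A) 4⁻¹ μ := by
  have h := hasSubgaussianMGF_of_mem_Icc (μ := μ) (a := 0) (b := 1)
    (measurable_one.indicator hA).aemeasurable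
    (ae_of_all _ fun x ↦ ⟨Set.indicator_nonneg (fun _ _ ↦ zero_le_one) x,
      Set.indicator_le_self' (fun _ _ ↦ zero_le_one) x⟩)
  rw [integral_indicator_one hA] at h
  convert h using 1
  ext
  norm_num

lemma ProbabilityTheory.HasSubgaussianMGF.measureReal_pi_sum_ge_le {f : Ω → ℝ} {c : NNReal}
    (hf : HasSubgaussianMGF f c μ) (n : ℕ) {x : ℝ} (hx : 0 ≤ x) :
    (Measure.pi fun _ : Fin n ↦ μ).real {ω | n * x ≤ ∑ i, f (ω i)} ≤
      exp (-(n * x ^ 2) / (2 * c)) := by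
  have hcoord (i : Fin n) : HasSubgaussianMGF (fun ω : Fin n → Ω ↦ f (ω i)) c
      (Measure.pi fun _ ↦ μ) := by
    refine HasSubgaussianMGF.of_map (measurable_pi_apply i).aemeasurable ?_
    rwa [(measurePreserving_eval (fun _ : Fin n ↦ μ) i).map_eq]
  have h := HasSubgaussianMGF.measure_sum_ge_le_of_iIndepFun (iIndepFun_pi fun _ ↦ hf.aemeasurable)
    (c := fun _ ↦ c) (s := Finset.univ) (fun i _ ↦ hcoord i) (mul_nonneg n.cast_nonneg hx)
  refine h.trans_eq ?_
  rcases n.eq_zero_or_pos with rfl | hn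
  · simp
  · congr 1
    simp only [Finset.sum_const, Finset.card_univ, Fintype.card_fin, nsmul_eq_mul, NNReal.coe_mul,
      NNReal.coe_natCast]
    field_simp

end Hoeffding

lemma natCast_mul_empMeas {n : ℕ} (ω : Fin n → ℝ × ℝ) (A : Set (ℝ × ℝ)) :
    n * empMeas ω A = ∑ i, A.indicator 1 (ω i) := by
  classical
  rcases n.eq_zero_or_pos with rfl | hn
  · simp
  · rw [empMeas, mul_div_cancel₀ _ (by positivity), Finset.card_filter]
    push_cast
    exact Finset.sum_congr rfl fun i _ ↦ by by_cases h : ω i ∈ A <;> simp [h]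

theorem measureReal_le_abs_sub_empMeas_le (μ : Measure (ℝ × ℝ)) [IsProbabilityMeasure μ]
    {A : Set (ℝ × ℝ)} (hA : MeasurableSet A) (n : ℕ) {x : ℝ} (hx : 0 ≤ x) :
    (Measure.pi fun _ : Fin n ↦ μ).real {ω | x ≤ |μ.real A - empMeas ω A|} ≤
      2 * exp (-2 * n * x ^ 2) := by
  set f : ℝ × ℝ → ℝ := fun y ↦ A.indicator 1 y - μ.real A
  have hf := hasSubgaussianMGF_indicator_sub_measureReal μ hA
  have hsum (ω : Fin n → ℝ × ℝ) : ∑ i, f (ω i) = n * (empMeas ω A - μ.real A) := by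
    simp only [f, Finset.sum_sub_distrib, Finset.sum_const, Finset.card_univ, Fintype.card_fin,
      nsmul_eq_mul, ← natCast_mul_empMeas, mul_sub]
  have hsplit : {ω : Fin n → ℝ × ℝ | x ≤ |μ.real A - empMeas ω A|} ⊆
      {ω | n * x ≤ ∑ i, f (ω i)} ∪ {ω | n * x ≤ ∑ i, (-f) (ω i)} := by
    intro ω hω
    simp only [Set.mem_union, Set.mem_ofPred_eq, Pi.neg_apply, Finset.sum_neg_distrib, hsum] at hω ⊢
    rcases le_abs'.mp hω with h | h
    · left; linarith [mul_le_mul_of_nonneg_left h n.cast_nonneg]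
    · right; linarith [mul_le_mul_of_nonneg_left h n.cast_nonneg]
  have htail : exp (-(n * x ^ 2) / (2 * ((4⁻¹ : NNReal) : ℝ))) = exp (-2 * n * x ^ 2) := by
    congr 1
    push_cast
    ring
  calc _ ≤ _ := measureReal_mono hsplit
    _ ≤ _ := measureReal_union_le _ _
    _ ≤ exp (-2 * n * x ^ 2) + exp (-2 * n * x ^ 2) := by
      rw [← htail]
      exact add_le_add (hf.measureReal_pi_sum_ge_le n hx) (hf.neg.measureReal_pi_sum_ge_le n hx)
    _ = _ := by ring

lemma measurableSet_cutInterval {m : ℕ} (cuts : Fin (m - 1) → ℝ) (i : Fin m) :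
    MeasurableSet (cutInterval cuts i) := by
  simp only [cutInterval, Set.ofPred_and, Set.ofPred_forall]
  exact .inter (.iInter fun _ ↦ .iInter fun _ ↦ measurableSet_Ici)
    (.iInter fun _ ↦ .iInter fun _ ↦ measurableSet_Iio)

lemma Grid.measurableSet_cell {r c : ℕ} (G : Grid r c) (i : Fin r) (j : Fin c) :
    MeasurableSet (G.cell i j) :=
  (measurable_fst (measurableSet_cutInterval _ j)).inter
    (measurable_snd (measurableSet_cutInterval _ i))

lemma tvDist_le_of_abs_sub_le {r c : ℕ} {p q : Fin r → Fin c → ℝ} {t : ℝ}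
    (h : ∀ i j, |p i j - q i j| ≤ t) : tvDist p q ≤ r * c * t / 2 := by
  have hsum : ∑ i, ∑ j, |p i j - q i j| ≤ ∑ _i : Fin r, ∑ _j : Fin c, t :=
    Finset.sum_le_sum fun i _ ↦ Finset.sum_le_sum fun j _ ↦ h i j
  simp only [Finset.sum_const, Finset.card_univ, Fintype.card_fin, nsmul_eq_mul] at hsum
  rw [tvDist]
  linarith

theorem ofReal_one_sub_le_measure_tvDist_gridPMF_le (μ : Measure (ℝ × ℝ))
    [IsProbabilityMeasure μ] {r c : ℕ} (G : Grid r c) (n : ℕ) {t : ℝ} (ht : 0 ≤ t) :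
    ENNReal.ofReal (1 - r * c * (2 * exp (-2 * n * t ^ 2))) ≤
      (Measure.pi fun _ : Fin n ↦ μ)
        {ω | tvDist (gridPMF μ G) (empGridPMF ω G) ≤ r * c * t / 2} := by
  set P := Measure.pi fun _ : Fin n ↦ μ
  set bad := ⋃ i, ⋃ j, {ω | t ≤ |gridPMF μ G i j - empGridPMF ω G i j|}
  have hbad : P.real bad ≤ r * c * (2 * exp (-2 * n * t ^ 2)) := by
    calc P.real bad ≤ ∑ i, P.real (⋃ j, {ω | t ≤ |gridPMF μ G i j - empGridPMF ω G i j|}) :=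
          measureReal_iUnion_fintype_le _
      _ ≤ ∑ _i : Fin r, ∑ _j : Fin c, 2 * exp (-2 * n * t ^ 2) :=
          Finset.sum_le_sum fun i _ ↦ (measureReal_iUnion_fintype_le _).trans <|
            Finset.sum_le_sum fun j _ ↦
              measureReal_le_abs_sub_empMeas_le μ (G.measurableSet_cell i j) n ht
      _ = _ := by
          simp only [Finset.sum_const, Finset.card_univ, Fintype.card_fin, nsmul_eq_mul]
          ring
  have hgood : badᶜ ⊆ {ω | tvDist (gridPMF μ G) (empGridPMF ω G) ≤ r * c * t / 2} := by
    intro ω hω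
    simp only [bad, Set.mem_compl_iff, Set.mem_iUnion, Set.mem_ofPred_eq, not_exists, not_le] at hω
    exact tvDist_le_of_abs_sub_le fun i j ↦ (hω i j).le
  have hcover : 1 ≤ P.real badᶜ + P.real bad := by
    simpa [Set.compl_union_self] using measureReal_union_le (μ := P) badᶜ bad
  calc ENNReal.ofReal (1 - r * c * (2 * exp (-2 * n * t ^ 2)))
      ≤ ENNReal.ofReal (P.real badᶜ) := ENNReal.ofReal_le_ofReal (by linarith)
    _ = P badᶜ := ofReal_measureReal
    _ ≤ _ := measure_mono hgood

lemma natCast_mul_ceil_rpow_mul_le {x α ε : ℝ} (hx : 1 ≤ x) (hε : 0 ≤ ε) {k l : ℕ}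
    (hkl : ((k * l : ℕ) : ℝ) ≤ x ^ α) :
    ((k * ⌈x ^ ε⌉₊ : ℕ) : ℝ) * ((l * ⌈x ^ ε⌉₊ : ℕ) : ℝ) ≤ 4 * x ^ (α + 2 * ε) := by
  have hxε : 1 ≤ x ^ ε := one_le_rpow hx hε
  have hceil : (⌈x ^ ε⌉₊ : ℝ) ≤ 2 * x ^ ε := (Nat.ceil_lt_two_mul (by linarith)).le
  rw [two_mul ε, rpow_add (by linarith), rpow_add (by linarith)]
  push_cast at hkl ⊢
  calc (k : ℝ) * ⌈x ^ ε⌉₊ * (l * ⌈x ^ ε⌉₊) = (k * l) * (⌈x ^ ε⌉₊ * ⌈x ^ ε⌉₊) := by ring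
    _ ≤ x ^ α * ((2 * x ^ ε) * (2 * x ^ ε)) := by gcongr
    _ = _ := by ring

lemma exp_neg_two_mul_sq_deviation_le {x : ℝ} (hx : 1 ≤ x) :
    exp (-2 * x * (2 * √(logb 2 x / x)) ^ 2) ≤ x ^ (-3 : ℝ) := by
  have hlog : 0 ≤ log x := log_nonneg hx
  have hlogb : log x ≤ logb 2 x := by
    rw [logb, le_div_iff₀ (log_pos one_lt_two)]
    nlinarith [log_two_lt_d9]
  rw [rpow_def_of_pos (by linarith), mul_pow, sq_sqrt (div_nonneg (logb_nonneg one_lt_two hx)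
    (by linarith))]
  refine exp_le_exp.mpr ?_
  field_simp
  linarith

lemma rpow_mul_sqrt_div_self {x L : ℝ} (hx : 0 < x) (a : ℝ) :
    x ^ a * √(L / x) = x ^ (a - 1 / 2) * √L := by
  rw [sqrt_div' _ hx.le, sqrt_eq_rpow x, rpow_sub hx]
  field_simp

theorem stmt7_general (μ : Measure (ℝ × ℝ)) [IsProbabilityMeasure μ]
    (α ε : ℝ) (hε : 0 < ε) :
    ∃ C > (0 : ℝ), ∃ N : ℕ, ∀ n : ℕ, N ≤ n →
      ∀ k l : ℕ, 2 ≤ k → 2 ≤ l → ((k * l : ℕ) : ℝ) ≤ (n : ℝ) ^ α →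
        ∀ Γ : Grid (k * ⌈(n : ℝ) ^ ε⌉₊) (l * ⌈(n : ℝ) ^ ε⌉₊), IsEquipartition μ Γ →
          ENNReal.ofReal (1 - C * (n : ℝ) ^ (α + 2 * ε - 3)) ≤
            (Measure.pi fun _ : Fin n => μ)
              {ω | tvDist (gridPMF μ Γ) (empGridPMF ω Γ) ≤
                C * (n : ℝ) ^ (α + 2 * ε - 1 / 2) * Real.sqrt (Real.logb 2 n)} := by
  refine ⟨8, by norm_num, 1, fun n hn k l _ _ hkl Γ _ ↦ ?_⟩
  have hn1 : (1 : ℝ) ≤ n := by exact_mod_cast hn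
  have hn0 : (0 : ℝ) < n := by linarith
  have hcells := natCast_mul_ceil_rpow_mul_le hn1 hε.le hkl
  refine (ENNReal.ofReal_le_ofReal ?_).trans
    ((ofReal_one_sub_le_measure_tvDist_gridPMF_le μ Γ n (t := 2 * √(logb 2 n / n))
      (by positivity)).trans (measure_mono (Set.ofPred_subset_ofPred.mpr fun ω hω ↦ hω.trans ?_)))
  · have htail := exp_neg_two_mul_sq_deviation_le hn1
    have hsplit : (n : ℝ) ^ (α + 2 * ε - 3) = n ^ (α + 2 * ε) * n ^ (-3 : ℝ) := by
      rw [← rpow_add hn0, sub_eq_add_neg]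
    rw [hsplit]
    have := mul_le_mul hcells (mul_le_mul_of_nonneg_left htail zero_le_two) (by positivity)
      (by positivity)
    linarith
  · calc _ ≤ 4 * (n : ℝ) ^ (α + 2 * ε) * (2 * √(logb 2 n / n)) / 2 := by gcongr
      _ = 4 * ((n : ℝ) ^ (α + 2 * ε - 1 / 2) * √(logb 2 n)) := by
        rw [← rpow_mul_sqrt_div_self hn0]; ring
      _ ≤ _ := by nlinarith [sqrt_nonneg (logb 2 n), rpow_nonneg hn0.le (α + 2 * ε - 1 / 2)]

theorem stmt7 (μ : Measure (ℝ × ℝ)) [IsProbabilityMeasure μ]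
    (α ε : ℝ) (hα : 0 < α) (hε : 0 < ε) :
    ∃ C > (0 : ℝ), ∃ N : ℕ, ∀ n : ℕ, N ≤ n →
      ∀ k l : ℕ, 2 ≤ k → 2 ≤ l → ((k * l : ℕ) : ℝ) ≤ (n : ℝ) ^ α →
        ∀ Γ : Grid (k * ⌈(n : ℝ) ^ ε⌉₊) (l * ⌈(n : ℝ) ^ ε⌉₊), IsEquipartition μ Γ →
          ENNReal.ofReal (1 - C * (n : ℝ) ^ (α + 2 * ε - 3)) ≤
            (Measure.pi fun _ : Fin n => μ)
              {ω | tvDist (gridPMF μ Γ) (empGridPMF ω Γ) ≤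
                C * (n : ℝ) ^ (α + 2 * ε - 1 / 2) * Real.sqrt (Real.logb 2 n)} :=
  stmt7_general μ α ε hε
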